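/- arXiv:1907.10766 — 3 statements merged into one kernel-verified Lean document; each statement's English description precedes it below -/
import Mathlib

section
/- Over ZF + DC, Turing Determinacy follows from the statement: for every f : 2^ℕ → 2^ℕ which is uniformly Turing invariant on a cone, either f(x) ≥_T x on a cone, or f is constant up to ≡_T on a cone (there is y with f(x) ≡_T y for all x in a cone). Concretely: if every ≡_T-invariant two-valued UTI function (taking only values 0̄ = 000... and 0̄′, the Turing jump of 0̄) is constant up to ≡_T on a cone, then every ≡_T-invariant subset of 2^ℕ contains a cone or is disjoint from a cone. -/
/-! Oracle computability preliminaries: codes for oracle partial recursive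
functions, a standard numbering `φ`, Turing reducibility, and related notions. -/

namespace MC

/-- Codes for oracle partial recursive functions. -/
inductive OCode : Type
  | zero : OCode
  | succ : OCode
  | left : OCode
  | right : OCode
  | oracle : OCode
  | pair : OCode → OCode → OCode
  | comp : OCode → OCode → OCode
  | prec : OCode → OCode → OCode
  | rfind' : OCode → OCode

/-- Evaluation of an oracle code with oracle `o : ℕ → ℕ`. -/
def evalo (o : ℕ → ℕ) : OCode → ℕ →. ℕ
  | OCode.zero => pure 0
  | OCode.succ => fun n => Part.some (n + 1)
  | OCode.left => fun n => Part.some (Nat.unpair n).1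
  | OCode.right => fun n => Part.some (Nat.unpair n).2
  | OCode.oracle => fun n => Part.some (o n)
  | OCode.pair cf cg => fun n => Nat.pair <$> evalo o cf n <*> evalo o cg n
  | OCode.comp cf cg => fun n => evalo o cg n >>= evalo o cf
  | OCode.prec cf cg =>
    Nat.unpaired fun a n =>
      n.rec (evalo o cf a) fun y IH => do
        let i ← IH
        evalo o cg (Nat.pair a (Nat.pair y i))
  | OCode.rfind' cf =>
    Nat.unpaired fun a m =>
      (Nat.rfind fun n => (fun m => m = 0) <$> evalo o cf (Nat.pair a (n + m))).map (· + m)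

/-- A standard numbering of oracle codes. -/
def ofNatOCode : ℕ → OCode
  | 0 => OCode.zero
  | 1 => OCode.succ
  | 2 => OCode.left
  | 3 => OCode.right
  | 4 => OCode.oracle
  | n + 5 =>
    let m := n.div2.div2
    have hm : m < n + 5 := by
      simp only [m, Nat.div2_val]
      exact
        lt_of_le_of_lt (le_trans (Nat.div_le_self _ _) (Nat.div_le_self _ _))
          (Nat.lt_succ_of_le (Nat.le_add_right _ _))
    have _m1 : m.unpair.1 < n + 5 := lt_of_le_of_lt m.unpair_left_le hm
    have _m2 : m.unpair.2 < n + 5 := lt_of_le_of_lt m.unpair_right_le hm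
    match n.bodd, n.div2.bodd with
    | false, false => OCode.pair (ofNatOCode m.unpair.1) (ofNatOCode m.unpair.2)
    | false, true  => OCode.comp (ofNatOCode m.unpair.1) (ofNatOCode m.unpair.2)
    | true , false => OCode.prec (ofNatOCode m.unpair.1) (ofNatOCode m.unpair.2)
    | true , true  => OCode.rfind' (ofNatOCode m)
decreasing_by all_goals first | exact _m1 | exact _m2 | exact hm

/-- `φ e x` is the `e`-th partial function computable with oracle `x ∈ 2^ℕ`. -/
def φ (e : ℕ) (x : ℕ → Bool) : ℕ →. ℕ :=
  evalo (fun n => cond (x n) 1 0) (ofNatOCode e)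

/-- `odot e x` ("`e ⊙_T x`") is `φ e x` when the latter is total with values in `{0,1}`
(read as an element of Cantor space), and undefined otherwise. -/
def odot (e : ℕ) (x : ℕ → Bool) : Part (ℕ → Bool) :=
  ⟨(∀ n, (φ e x n).Dom) ∧ ∀ n, ∀ m ∈ φ e x n, m ≤ 1,
   fun h n => decide ((φ e x n).get (h.1 n) = 1)⟩

/-- Turing reducibility: `x = φ_e^y` for some `e`. -/
def TRed (x y : ℕ → Bool) : Prop := ∃ e, x ∈ odot e y

/-- Turing equivalence. -/
def TEquiv (x y : ℕ → Bool) : Prop := TRed x y ∧ TRed y x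

open scoped Classical in
/-- `sdot (i,j) x` ("`(i,j) ˢ⊙_T x`") is `φ_i^x` if `φ_i^x ∈ 2^ℕ` and `φ_j^{φ_i^x} = x`,
and undefined otherwise. -/
noncomputable def sdot (p : ℕ × ℕ) (x : ℕ → Bool) : Part (ℕ → Bool) :=
  (odot p.1 x).bind fun y => if x ∈ odot p.2 y then Part.some y else Part.none

/-- The join of a sequence: `(⨁ₙ xₙ)(⟨i,j⟩) = x_j(i)`. -/
def joinSeq (f : ℕ → ℕ → Bool) : ℕ → Bool :=
  fun k => f (Nat.unpair k).2 (Nat.unpair k).1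

/-- The join of two elements of Cantor space. -/
def join2 (a b : ℕ → Bool) : ℕ → Bool :=
  fun n => if n % 2 = 0 then a (n / 2) else b ((n - 1) / 2)

/-- Prepending a bit to an element of Cantor space. -/
def consBit (b : Bool) (x : ℕ → Bool) : ℕ → Bool :=
  fun n => match n with
  | 0 => b
  | n + 1 => x n

open scoped Classical in
/-- The Turing jump: `x′(n) = 1` iff `n ∈ dom(φ_n^x)`. -/
noncomputable def jump (x : ℕ → Bool) : ℕ → Bool :=
  fun n => decide (φ n x n).Dom

/-- The constant-zero element of Cantor space. -/
def zeros : ℕ → Bool := fun _ => false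

end MC

/-- Turing Determinacy: every `≡_T`-invariant set contains a cone or is disjoint from a cone. -/
def TD : Prop :=
  ∀ A : Set (ℕ → Bool), (∀ x y, x ∈ A → MC.TEquiv x y → y ∈ A) →
    (∃ z, ∀ x, MC.TRed z x → x ∈ A) ∨ ∃ z, ∀ x, MC.TRed z x → x ∉ A

/-- `f` is uniformly Turing invariant on a cone. -/
def UTIonCone (f : (ℕ → Bool) → (ℕ → Bool)) : Prop :=
  ∃ (z : ℕ → Bool) (u : ℕ × ℕ → ℕ × ℕ),
    ∀ (p : ℕ × ℕ) (x : ℕ → Bool), MC.TRed z x →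
      ∀ w ∈ MC.sdot p x, MC.TRed z w → f w ∈ MC.sdot (u p) (f x)

/-!
The map sending `x` to `0̄` if `x ∈ A` and to `0̄′` otherwise is `≡_T`-invariant when `A` is, and
every `≡_T`-invariant map is uniformly Turing invariant, with the identity pair `(4, 4)` as
uniformity function. If this map is constant up to `≡_T` on the cone above `w`, then, because
`0̄′ ≰_T 0̄`, every `x ≥_T w` lies in `A` exactly when `w` does.
-/

namespace MC

def OCode.encode : OCode → ℕ
  | OCode.zero => 0
  | OCode.succ => 1
  | OCode.left => 2
  | OCode.right => 3
  | OCode.oracle => 4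
  | OCode.pair cf cg => Nat.bit false (Nat.bit false (Nat.pair cf.encode cg.encode)) + 5
  | OCode.comp cf cg => Nat.bit false (Nat.bit true (Nat.pair cf.encode cg.encode)) + 5
  | OCode.prec cf cg => Nat.bit true (Nat.bit false (Nat.pair cf.encode cg.encode)) + 5
  | OCode.rfind' cf => Nat.bit true (Nat.bit true cf.encode) + 5

@[simp] lemma ofNatOCode_encode (c : OCode) : ofNatOCode c.encode = c := by
  induction c with
  | pair _ _ ihf ihg | comp _ _ ihf ihg | prec _ _ ihf ihg =>
    rw [OCode.encode, ofNatOCode]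
    simp only [Nat.bodd_bit, Nat.div2_bit, Nat.unpair_pair, ihf, ihg]
  | rfind' _ ih =>
    rw [OCode.encode, ofNatOCode]
    simp only [Nat.bodd_bit, Nat.div2_bit, ih]
  | _ => rw [OCode.encode, ofNatOCode]

def OCode.substOracle : OCode → OCode → OCode
  | OCode.zero, _ => OCode.zero
  | OCode.succ, _ => OCode.succ
  | OCode.left, _ => OCode.left
  | OCode.right, _ => OCode.right
  | OCode.oracle, d => d
  | OCode.pair cf cg, d => OCode.pair (cf.substOracle d) (cg.substOracle d)
  | OCode.comp cf cg, d => OCode.comp (cf.substOracle d) (cg.substOracle d)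
  | OCode.prec cf cg, d => OCode.prec (cf.substOracle d) (cg.substOracle d)
  | OCode.rfind' cf, d => OCode.rfind' (cf.substOracle d)

lemma evalo_substOracle {o o' : ℕ → ℕ} {d : OCode} (hd : ∀ n, evalo o d n = Part.some (o' n))
    (c : OCode) : evalo o (c.substOracle d) = evalo o' c := by
  induction c with
  | oracle => funext n; exact hd n
  | pair _ _ ihf ihg | comp _ _ ihf ihg | prec _ _ ihf ihg =>
    rw [OCode.substOracle, evalo, evalo, ihf, ihg]
  | rfind' _ ih => rw [OCode.substOracle, evalo, evalo, ih]
  | _ => rfl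

def bitOracle (x : ℕ → Bool) (n : ℕ) : ℕ := cond (x n) 1 0

lemma φ_eq_evalo (e : ℕ) (x : ℕ → Bool) : φ e x = evalo (bitOracle x) (ofNatOCode e) := rfl

lemma mem_odot_iff {e : ℕ} {x b : ℕ → Bool} :
    b ∈ odot e x ↔ ∀ n, φ e x n = Part.some (bitOracle b n) := by
  constructor
  · rintro ⟨⟨hdom, hbit⟩, rfl⟩ n
    have hle := hbit n _ (Part.get_mem (hdom n))
    rw [Part.eq_some_iff]
    convert Part.get_mem (hdom n)
    show cond (decide (_ = 1)) 1 0 = _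
    interval_cases (φ e x n).get (hdom n) <;> rfl
  · intro h
    refine ⟨⟨fun n => by rw [h]; trivial, fun n m hm => ?_⟩, funext fun n => ?_⟩
    · rw [h, Part.mem_some_iff] at hm
      rw [hm, bitOracle]
      cases b n <;> decide
    · show decide ((φ e x n).get _ = 1) = b n
      rw [Part.get_eq_of_mem (by rw [h]; exact Part.mem_some _), bitOracle]
      cases b n <;> rfl

lemma tRed_iff_exists_evalo {a b : ℕ → Bool} :
    TRed a b ↔ ∃ c, ∀ n, evalo (bitOracle b) c n = Part.some (bitOracle a n) := by
  simp only [TRed, mem_odot_iff, φ_eq_evalo]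
  exact ⟨fun ⟨e, he⟩ => ⟨_, he⟩, fun ⟨c, hc⟩ => ⟨c.encode, by rwa [ofNatOCode_encode]⟩⟩

lemma TRed.refl (x : ℕ → Bool) : TRed x x :=
  tRed_iff_exists_evalo.2 ⟨OCode.oracle, fun _ => rfl⟩

lemma TRed.trans {a b c : ℕ → Bool} (hab : TRed a b) (hbc : TRed b c) : TRed a c := by
  obtain ⟨cab, hab⟩ := tRed_iff_exists_evalo.1 hab
  obtain ⟨cbc, hbc⟩ := tRed_iff_exists_evalo.1 hbc
  exact tRed_iff_exists_evalo.2 ⟨cab.substOracle cbc, by rwa [evalo_substOracle hbc]⟩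

lemma TEquiv.symm {x y : ℕ → Bool} (h : TEquiv x y) : TEquiv y x := ⟨h.2, h.1⟩

lemma TEquiv.trans {x y z : ℕ → Bool} (hxy : TEquiv x y) (hyz : TEquiv y z) : TEquiv x z :=
  ⟨hxy.1.trans hyz.1, hyz.2.trans hxy.2⟩

lemma TEquiv.of_mem_sdot {p : ℕ × ℕ} {x w : ℕ → Bool} (hw : w ∈ sdot p x) : TEquiv w x := by
  classical
  obtain ⟨y, hy, hw⟩ := Part.mem_bind_iff.1 hw
  split_ifs at hw with hxy
  · obtain rfl := Part.mem_some_iff.1 hw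
    exact ⟨⟨p.1, hy⟩, ⟨p.2, hxy⟩⟩
  · exact absurd hw (Part.notMem_none _)

lemma self_mem_odot_four (x : ℕ → Bool) : x ∈ odot 4 x :=
  mem_odot_iff.2 fun n => by rw [φ_eq_evalo, ofNatOCode]; rfl

lemma self_mem_sdot_four_four (x : ℕ → Bool) : x ∈ sdot (4, 4) x := by
  classical
  exact Part.mem_bind_iff.2 ⟨x, self_mem_odot_four x, by simp [self_mem_odot_four]⟩

lemma evalo_rfind'_left_pair_dom_iff (o : ℕ → ℕ) (a m : ℕ) :
    (evalo o (OCode.rfind' OCode.left) (Nat.pair a m)).Dom ↔ a = 0 := by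
  simp only [evalo, Nat.unpaired, Nat.unpair_pair, Part.map_Dom]
  constructor
  · intro hdom
    obtain ⟨n, hn, -⟩ := Nat.rfind_dom.1 hdom
    simpa using hn
  · rintro rfl
    exact Nat.rfind_dom.2 ⟨0, by simp, fun h => absurd h (Nat.not_lt_zero _)⟩

lemma not_tRed_jump_self (x : ℕ → Bool) : ¬ TRed (jump x) x := by
  rw [tRed_iff_exists_evalo]
  rintro ⟨c, hc⟩
  -- `d` halts on `n` iff `jump x n = false`; on its own index this contradicts the jump.
  set d := (OCode.rfind' OCode.left).comp (c.pair OCode.zero)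
  have hd : ∀ n, (φ d.encode x n).Dom ↔ jump x n = false := by
    intro n
    have hdn : φ d.encode x n =
        evalo (bitOracle x) (OCode.rfind' OCode.left) (Nat.pair (bitOracle (jump x) n) 0) := by
      simp [φ_eq_evalo, d, evalo, hc, Seq.seq, pure, PFun.pure]
    rw [hdn, evalo_rfind'_left_pair_dom_iff, bitOracle]
    cases jump x n <;> simp
  have := hd d.encode
  simp [jump] at this

open scoped Classical in
noncomputable def jumpIndicator (A : Set (ℕ → Bool)) (x : ℕ → Bool) : ℕ → Bool :=
  if x ∈ A then zeros else jump zeros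

section JumpIndicator

variable {A : Set (ℕ → Bool)} {x : ℕ → Bool}

lemma jumpIndicator_of_mem (hx : x ∈ A) : jumpIndicator A x = zeros := if_pos hx

lemma jumpIndicator_of_notMem (hx : x ∉ A) : jumpIndicator A x = jump zeros := if_neg hx

lemma jumpIndicator_eq_zeros_or_eq_jump (A : Set (ℕ → Bool)) (x : ℕ → Bool) :
    jumpIndicator A x = zeros ∨ jumpIndicator A x = jump zeros := by
  by_cases hx : x ∈ A
  · exact Or.inl (jumpIndicator_of_mem hx)
  · exact Or.inr (jumpIndicator_of_notMem hx)

lemma jumpIndicator_tEquiv_invariant (hA : ∀ x y, x ∈ A → TEquiv x y → y ∈ A) (x y : ℕ → Bool)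
    (hxy : TEquiv x y) : jumpIndicator A x = jumpIndicator A y := by
  have hmem : x ∈ A ↔ y ∈ A := ⟨fun hx => hA x y hx hxy, fun hy => hA y x hy hxy.symm⟩
  by_cases hx : x ∈ A
  · rw [jumpIndicator_of_mem hx, jumpIndicator_of_mem (hmem.1 hx)]
  · rw [jumpIndicator_of_notMem hx, jumpIndicator_of_notMem (mt hmem.2 hx)]

lemma mem_iff_of_tEquiv_jumpIndicator {y : ℕ → Bool}
    (h : TEquiv (jumpIndicator A x) (jumpIndicator A y)) : x ∈ A ↔ y ∈ A := by
  by_cases hx : x ∈ A <;> by_cases hy : y ∈ A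
  · exact iff_of_true hx hy
  · rw [jumpIndicator_of_mem hx, jumpIndicator_of_notMem hy] at h
    exact (not_tRed_jump_self zeros h.2).elim
  · rw [jumpIndicator_of_notMem hx, jumpIndicator_of_mem hy] at h
    exact (not_tRed_jump_self zeros h.1).elim
  · exact iff_of_false hx hy

end JumpIndicator

end MC

lemma UTIonCone.of_tEquiv_invariant {f : (ℕ → Bool) → (ℕ → Bool)}
    (hf : ∀ x y, MC.TEquiv x y → f x = f y) : UTIonCone f :=
  ⟨MC.zeros, fun _ => (4, 4), fun _ x _ w hw _ =>
    hf x w (MC.TEquiv.of_mem_sdot hw).symm ▸ MC.self_mem_sdot_four_four (f x)⟩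

/-- TD follows from part I of uniform Martin's conjecture (in the form:
every function UTI on a cone is increasing on a cone or constant up to `≡_T` on a cone);
concretely, it suffices that every `≡_T`-invariant UTI function taking only the values
`0̄` and `0̄′` is constant up to `≡_T` on a cone. -/
theorem td_of_uniform_martin_I
    (h : ∀ f : (ℕ → Bool) → (ℕ → Bool),
      (∀ x y, MC.TEquiv x y → f x = f y) →
      (∀ x, f x = MC.zeros ∨ f x = MC.jump MC.zeros) →
      UTIonCone f →
      ∃ y w, ∀ x, MC.TRed w x → MC.TEquiv (f x) y) :
    TD := by
  intro A hA
  have hinv := MC.jumpIndicator_tEquiv_invariant hA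
  obtain ⟨y, w, hw⟩ := h (MC.jumpIndicator A) hinv (MC.jumpIndicator_eq_zeros_or_eq_jump A)
    (UTIonCone.of_tEquiv_invariant hinv)
  have hcone : ∀ x, MC.TRed w x → (x ∈ A ↔ w ∈ A) := fun x hx =>
    MC.mem_iff_of_tEquiv_jumpIndicator ((hw x hx).trans (hw w (MC.TRed.refl w)).symm)
  by_cases hwA : w ∈ A
  · exact Or.inl ⟨w, fun x hx => (hcone x hx).2 hwA⟩
  · exact Or.inr ⟨w, fun x hx => (hcone x hx).not.2 hwA⟩
end

section
/- For every x ∈ 2^ℕ, the equivalence relations ≈_T^x (i ≈ j iff φ_i^x = φ_j^x as partial functions) and =^{ce,x} (i ≈ j iff W_i^x = W_j^x, equality of domains) are computably bi-reducible: (≈_T^x) ≤_c (=^{ce,x}) and (=^{ce,x}) ≤_c (≈_T^x), via computable reductions that do not depend on x. -/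
/-! The first reduction sends `e` to an index of a machine that halts on `⟨n, m⟩` exactly when
`φ_e^x(n) = m`: its domain is the graph of `φ_e^x`, and partial functions are equal iff their
graphs are. The second sends `e` to an index of "run `φ_e^x`, then output `0`", a partial
function determined by, and determining, the domain of `φ_e^x`. Both indices are obtained from
`e` by primitive recursive arithmetic on the numbering `ofNatOCode`, without looking at `x`. -/

namespace MC

theorem pfun_eq_iff_forall_mem_unpair (f g : ℕ →. ℕ) :
    f = g ↔ ∀ k : ℕ, (k.unpair.2 ∈ f k.unpair.1 ↔ k.unpair.2 ∈ g k.unpair.1) := by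
  refine ⟨fun h k => h ▸ Iff.rfl, fun h => funext fun n => Part.ext fun m => ?_⟩
  simpa using h (Nat.pair n m)

theorem forall_dom_iff_iff_map_const_eq {α β γ : Type*} (f g : α →. β) (c : γ) :
    (∀ a, (f a).Dom ↔ (g a).Dom) ↔
      (fun a => (f a).map fun _ => c : α →. γ) = fun a => (g a).map fun _ => c := by
  refine ⟨fun h => funext fun a => Part.ext' (h a) fun _ _ => rfl, fun h a => ?_⟩
  exact Iff.of_eq (congrArg (fun r : α →. γ => (r a).Dom) h)

theorem pair_sub_sub_eq_zero_iff {a b : ℕ} : Nat.pair (a - b) (b - a) = 0 ↔ a = b := by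
  rw [show (0 : ℕ) = Nat.pair 0 0 by rfl, Nat.pair_eq_pair]
  omega

-- `ofNatOCode (n + 5)` reads the constructor off `n % 4` and its arguments off `n / 4`.
def idxPair (a b : ℕ) : ℕ := 4 * Nat.pair a b + 5

def idxComp (a b : ℕ) : ℕ := 4 * Nat.pair a b + 7

def idxPrec (a b : ℕ) : ℕ := 4 * Nat.pair a b + 6

def idxRfind' (a : ℕ) : ℕ := 4 * a + 8

theorem ofNatOCode_idxPair (a b : ℕ) :
    ofNatOCode (idxPair a b) = .pair (ofNatOCode a) (ofNatOCode b) := by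
  rw [idxPair, show 4 * Nat.pair a b + 5 = 2 * (2 * Nat.pair a b) + 5 by ring, ofNatOCode]
  simp [Nat.bodd_mul]

theorem ofNatOCode_idxComp (a b : ℕ) :
    ofNatOCode (idxComp a b) = .comp (ofNatOCode a) (ofNatOCode b) := by
  rw [idxComp, show 4 * Nat.pair a b + 7 = 2 * (2 * Nat.pair a b + 1) + 5 by ring, ofNatOCode]
  simp [Nat.bodd_mul]

theorem ofNatOCode_idxPrec (a b : ℕ) :
    ofNatOCode (idxPrec a b) = .prec (ofNatOCode a) (ofNatOCode b) := by
  rw [idxPrec, show 4 * Nat.pair a b + 6 = 2 * (2 * Nat.pair a b) + 1 + 5 by ring, ofNatOCode]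
  simp [Nat.bodd_mul]

theorem ofNatOCode_idxRfind' (a : ℕ) :
    ofNatOCode (idxRfind' a) = .rfind' (ofNatOCode a) := by
  rw [idxRfind', show 4 * a + 8 = 2 * (2 * a + 1) + 1 + 5 by ring, ofNatOCode]
  simp [Nat.bodd_mul]

def encOCode : OCode → ℕ
  | .zero => 0
  | .succ => 1
  | .left => 2
  | .right => 3
  | .oracle => 4
  | .pair a b => idxPair (encOCode a) (encOCode b)
  | .comp a b => idxComp (encOCode a) (encOCode b)
  | .prec a b => idxPrec (encOCode a) (encOCode b)
  | .rfind' a => idxRfind' (encOCode a)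

theorem ofNatOCode_encOCode : ∀ c : OCode, ofNatOCode (encOCode c) = c
  | .zero | .succ | .left | .right | .oracle => by rw [encOCode, ofNatOCode]
  | .pair a b => by rw [encOCode, ofNatOCode_idxPair, ofNatOCode_encOCode a, ofNatOCode_encOCode b]
  | .comp a b => by rw [encOCode, ofNatOCode_idxComp, ofNatOCode_encOCode a, ofNatOCode_encOCode b]
  | .prec a b => by rw [encOCode, ofNatOCode_idxPrec, ofNatOCode_encOCode a, ofNatOCode_encOCode b]
  | .rfind' a => by rw [encOCode, ofNatOCode_idxRfind', ofNatOCode_encOCode a]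

theorem primrec₂_four_mul_pair_add (r : ℕ) : Primrec₂ fun a b => 4 * Nat.pair a b + r :=
  Primrec.nat_add.comp (Primrec.nat_mul.comp (Primrec.const 4) Primrec₂.natPair) (Primrec.const r)

theorem primrec₂_idxPair : Primrec₂ idxPair := primrec₂_four_mul_pair_add 5

theorem primrec₂_idxComp : Primrec₂ idxComp := primrec₂_four_mul_pair_add 7

theorem primrec_idxRfind' : Primrec idxRfind' :=
  Primrec.nat_add.comp (Primrec.nat_mul.comp (Primrec.const 4) Primrec.id) (Primrec.const 8)

def cId : OCode := .pair .left .right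

def cPred : OCode := .comp (.prec .zero (.comp .left .right)) (.pair .zero cId)

def cSub : OCode := .prec cId (.comp cPred (.comp .right .right))

def cEqTest : OCode := .pair cSub (.comp cSub (.pair .right .left))

def cGraphTest (c : OCode) : OCode :=
  .comp cEqTest (.pair (.comp c (.comp .left .left)) (.comp .right .left))

-- `rfind'` searches from `⟨k, 0⟩`; the test ignores the search variable, so the search halts
-- at once when the test outputs `0` and diverges otherwise.
def cGraph (c : OCode) : OCode := .comp (.rfind' (cGraphTest c)) (.pair cId .zero)

def cHalt (c : OCode) : OCode := .comp .zero c

section evalo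

variable (o : ℕ → ℕ)

@[simp] theorem evalo_zero (n : ℕ) : evalo o .zero n = Part.some 0 := rfl

@[simp] theorem evalo_left (n : ℕ) : evalo o .left n = Part.some n.unpair.1 := rfl

@[simp] theorem evalo_right (n : ℕ) : evalo o .right n = Part.some n.unpair.2 := rfl

@[simp] theorem evalo_comp (cf cg : OCode) (n : ℕ) :
    evalo o (.comp cf cg) n = (evalo o cg n).bind fun k => evalo o cf k := rfl

@[simp] theorem evalo_pair (cf cg : OCode) (n : ℕ) :
    evalo o (.pair cf cg) n = (evalo o cf n).bind fun a => (evalo o cg n).map (Nat.pair a) := by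
  simp [evalo, Seq.seq, Part.bind_map, Part.map_eq_map]

theorem evalo_prec_zero (cf cg : OCode) (a : ℕ) :
    evalo o (.prec cf cg) (Nat.pair a 0) = evalo o cf a := by
  simp [evalo, Nat.unpaired]

theorem evalo_prec_succ (cf cg : OCode) (a n : ℕ) :
    evalo o (.prec cf cg) (Nat.pair a (n + 1)) =
      (evalo o (.prec cf cg) (Nat.pair a n)).bind fun i =>
        evalo o cg (Nat.pair a (Nat.pair n i)) := by
  simp [evalo, Nat.unpaired]

theorem evalo_rfind'_dom_of_forall_eq {cf : OCode} {a : ℕ} {p : Part ℕ}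
    (h : ∀ s, evalo o cf (Nat.pair a s) = p) (m : ℕ) :
    (evalo o (.rfind' cf) (Nat.pair a m)).Dom ↔ 0 ∈ p := by
  simp only [evalo, Nat.unpaired, Nat.unpair_pair, h]
  refine Nat.rfind_dom.trans ⟨?_, fun h0 => ⟨0, by simpa using h0, by simp⟩⟩
  rintro ⟨n, hn, -⟩
  simpa using hn

@[simp] theorem evalo_cId (n : ℕ) : evalo o cId n = Part.some n := by
  simp [cId]

@[simp] theorem evalo_cPred (n : ℕ) : evalo o cPred n = Part.some (n - 1) := by
  suffices h : evalo o (.prec .zero (.comp .left .right)) (Nat.pair 0 n) = Part.some (n - 1) by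
    simpa [cPred] using h
  induction n with
  | zero => simp [evalo_prec_zero]
  | succ n ih => simp [evalo_prec_succ, ih]

@[simp] theorem evalo_cSub (a b : ℕ) : evalo o cSub (Nat.pair a b) = Part.some (a - b) := by
  induction b with
  | zero => simp [cSub, evalo_prec_zero]
  | succ b ih =>
    rw [cSub] at ih ⊢
    simp [evalo_prec_succ, ih, Nat.sub_sub]

@[simp] theorem evalo_cEqTest (a b : ℕ) :
    evalo o cEqTest (Nat.pair a b) = Part.some (Nat.pair (a - b) (b - a)) := by
  simp [cEqTest]

theorem evalo_cGraphTest (c : OCode) (k s : ℕ) :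
    evalo o (cGraphTest c) (Nat.pair k s) =
      (evalo o c k.unpair.1).map fun r => Nat.pair (r - k.unpair.2) (k.unpair.2 - r) := by
  simp [cGraphTest, Part.bind_some_eq_map]

theorem evalo_cGraph_dom (c : OCode) (k : ℕ) :
    (evalo o (cGraph c) k).Dom ↔ k.unpair.2 ∈ evalo o c k.unpair.1 := by
  rw [cGraph, evalo_comp, evalo_pair]
  simp only [evalo_cId, evalo_zero, Part.bind_some, Part.map_some]
  rw [evalo_rfind'_dom_of_forall_eq o (evalo_cGraphTest o c k)]
  simp [pair_sub_sub_eq_zero_iff]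

theorem evalo_cHalt (c : OCode) (n : ℕ) :
    evalo o (cHalt c) n = (evalo o c n).map fun _ => 0 := by
  simp [cHalt, Part.bind_some_eq_map]

end evalo

def graphIdx (e : ℕ) : ℕ :=
  idxComp
    (idxRfind' (idxComp (encOCode cEqTest)
      (idxPair (idxComp e (encOCode (.comp .left .left))) (encOCode (.comp .right .left)))))
    (encOCode (.pair cId .zero))

def haltIdx (e : ℕ) : ℕ := idxComp 0 e

theorem ofNatOCode_graphIdx (e : ℕ) : ofNatOCode (graphIdx e) = cGraph (ofNatOCode e) := by
  simp only [graphIdx, ofNatOCode_idxComp, ofNatOCode_idxRfind', ofNatOCode_idxPair,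
    ofNatOCode_encOCode, cGraph, cGraphTest]

theorem ofNatOCode_haltIdx (e : ℕ) : ofNatOCode (haltIdx e) = cHalt (ofNatOCode e) := by
  rw [haltIdx, ofNatOCode_idxComp, cHalt, ofNatOCode]

theorem computable_graphIdx : Computable graphIdx :=
  Primrec.to_comp <| primrec₂_idxComp.comp
    (primrec_idxRfind'.comp <| primrec₂_idxComp.comp (Primrec.const _) <|
      primrec₂_idxPair.comp (primrec₂_idxComp.comp Primrec.id (Primrec.const _)) (Primrec.const _))
    (Primrec.const _)

theorem computable_haltIdx : Computable haltIdx :=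
  (primrec₂_idxComp.comp (Primrec.const 0) Primrec.id).to_comp

theorem φ_graphIdx_dom (e : ℕ) (x : ℕ → Bool) (k : ℕ) :
    (φ (graphIdx e) x k).Dom ↔ k.unpair.2 ∈ φ e x k.unpair.1 := by
  rw [φ, ofNatOCode_graphIdx, evalo_cGraph_dom, φ]

theorem φ_haltIdx (e : ℕ) (x : ℕ → Bool) :
    φ (haltIdx e) x = fun n => (φ e x n).map fun _ => 0 := by
  funext n
  rw [φ, ofNatOCode_haltIdx, evalo_cHalt, φ]

end MC

/-- `≈_T^x` and `=^{ce,x}` are computably bi-reducible, via computable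
reductions not depending on `x`. -/
theorem approx_ce_bireducible :
    ∃ v w : ℕ → ℕ, Computable v ∧ Computable w ∧
      ∀ x : ℕ → Bool,
        (∀ i j, (MC.φ i x = MC.φ j x ↔
          ∀ n, ((MC.φ (v i) x n).Dom ↔ (MC.φ (v j) x n).Dom))) ∧
        (∀ i j, ((∀ n, (MC.φ i x n).Dom ↔ (MC.φ j x n).Dom) ↔
          MC.φ (w i) x = MC.φ (w j) x)) := by
  refine ⟨MC.graphIdx, MC.haltIdx, MC.computable_graphIdx, MC.computable_haltIdx,
    fun x => ⟨fun i j => ?_, fun i j => ?_⟩⟩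
  · simp only [MC.φ_graphIdx_dom]
    exact MC.pfun_eq_iff_forall_mem_unpair _ _
  · rw [MC.φ_haltIdx, MC.φ_haltIdx]
    exact MC.forall_dom_iff_iff_map_const_eq _ _ 0
end

section
/- There exist 2^{ℵ₀} many equivalence relations on ℕ that are pairwise incomparable under computable reducibility ≤_c. -/
/-- Computable reducibility of equivalence relations on `ℕ`. -/
def CRedP (R S : ℕ → ℕ → Prop) : Prop :=
  ∃ v : ℕ → ℕ, Computable v ∧ ∀ m n, (R m n ↔ S (v m) (v n))

/-!
The relations are `pairRel A`, whose only non-singleton classes are the pairs `{2k, 2k+1}` with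
`k ∈ A`. A computable reduction `v` of `pairRel A` to `pairRel B` decides `k ∈ A` by the single
question whether `v (2k)` and `v (2k+1)` lie in one class of `pairRel B`, so `A` is a one-query
reduct of `B`. Every such equation between `A` and `B` is refuted by some pair of finite initial
segments of `A` and `B` extending any given pair. Hence a perfect tree of finite binary strings,
built by finite extensions so that each of the countably many equations is refuted at some level
between any two distinct nodes, has continuum many branches, and the `pairRel`s of any two of them
are incomparable, in particular distinct.
-/

namespace Cantor

def Agrees (A : ℕ → Bool) (p : List Bool) : Prop :=
  ∀ i (hi : i < p.length), A i = p[i]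

theorem Agrees.of_prefix {A : ℕ → Bool} {p q : List Bool} (h : p <+: q) (hA : Agrees A q) :
    Agrees A p :=
  fun i hi => (hA i (hi.trans_le h.length_le)).trans (h.getElem hi).symm

def Forces (F : (ℕ → Bool) → (ℕ → Bool) → Prop) (p q : List Bool) : Prop :=
  ∀ A B, Agrees A p → Agrees B q → ¬F A B

theorem Forces.mono {F : (ℕ → Bool) → (ℕ → Bool) → Prop} {p q p' q' : List Bool}
    (h : Forces F p q) (hp : p <+: p') (hq : q <+: q') : Forces F p' q' :=
  fun A B hA hB => h A B (hA.of_prefix hp) (hB.of_prefix hq)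

theorem Forces.of_imp {F F' : (ℕ → Bool) → (ℕ → Bool) → Prop} {p q : List Bool}
    (h : Forces F' p q) (hFF' : ∀ A B, F A B → F' A B) : Forces F p q :=
  fun A B hA hB hF => h A B hA hB (hFF' A B hF)

def IsOneQueryReduction (g : ℕ → ℕ) (h : ℕ → Bool → Bool) (A B : ℕ → Bool) : Prop :=
  ∀ n, A n = h n (B (g n))

theorem exists_forces_not_isOneQueryReduction (g : ℕ → ℕ) (h : ℕ → Bool → Bool)
    (p q : List Bool) :
    ∃ p' q', p <+: p' ∧ q <+: q' ∧ Forces (IsOneQueryReduction g h) p' q' := by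
  set n := p.length
  -- pad `q` so that it decides the query `B (g n)`, then let `A n` answer it wrongly
  set q' := q ++ List.replicate (g n + 1 - q.length) false
  have hq' : g n < q'.length := by simp only [q', List.length_append, List.length_replicate]; omega
  refine ⟨p ++ [!h n q'[g n]], q', List.prefix_append _ _, List.prefix_append _ _, ?_⟩
  intro A B hA hB hAB
  have hAn : A n = !h n q'[g n] := by simpa [n] using hA n (by simp [n])
  rw [hAB n, hB (g n) hq'] at hAn
  exact Bool.eq_not_self _ |>.mp hAn

section Tree

variable {F : ℕ → (ℕ → Bool) → (ℕ → Bool) → Prop}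

theorem exists_forces_extension
    (hF : ∀ k p q, ∃ p' q', p <+: p' ∧ q <+: q' ∧ Forces (F k) p' q')
    {ι : Type*} [DecidableEq ι] (T : Finset (ℕ × ι × ι)) (M : ι → List Bool) :
    ∃ M' : ι → List Bool, (∀ i, M i <+: M' i) ∧
      ∀ t ∈ T, t.2.1 ≠ t.2.2 → Forces (F t.1) (M' t.2.1) (M' t.2.2) := by
  induction T using Finset.induction_on with
  | empty => exact ⟨M, fun _ => List.prefix_refl _, by simp⟩
  | insert t T _ ih =>
    obtain ⟨M', hMM', hT⟩ := ih
    obtain ⟨k, σ, τ⟩ := t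
    by_cases hστ : σ = τ
    · refine ⟨M', hMM', fun t ht hne => ?_⟩
      rcases Finset.mem_insert.1 ht with rfl | ht
      exacts [absurd hστ hne, hT t ht hne]
    obtain ⟨p, q, hp, hq, hpq⟩ := hF k (M' σ) (M' τ)
    set M'' := Function.update (Function.update M' σ p) τ q
    have hM'M'' : ∀ i, M' i <+: M'' i := by
      intro i
      by_cases hiτ : i = τ
      · subst hiτ; simpa [M'', Ne.symm hστ] using hq
      by_cases hiσ : i = σ
      · subst hiσ; simpa [M'', hiτ] using hp
      · simp [M'', hiτ, hiσ]
    refine ⟨M'', fun i => (hMM' i).trans (hM'M'' i), fun t ht hne => ?_⟩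
    rcases Finset.mem_insert.1 ht with rfl | ht
    · simpa [M'', hστ] using hpq
    · exact (hT t ht hne).mono (hM'M'' _) (hM'M'' _)

variable (hF : ∀ k p q, ∃ p' q', p <+: p' ∧ q <+: q' ∧ Forces (F k) p' q')

/-- The finite conditions attached to the nodes `σ : Fin s → Bool` of level `s` of the perfect
tree. -/
noncomputable def level : (s : ℕ) → (Fin s → Bool) → List Bool
  | 0 => fun _ => []
  | s + 1 => Classical.choose <| exists_forces_extension hF
      (Finset.range (s + 1) ×ˢ Finset.univ) fun σ => level s (Fin.init σ) ++ [σ (Fin.last s)]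

theorem level_succ_extends (s : ℕ) (σ : Fin (s + 1) → Bool) :
    level hF s (Fin.init σ) ++ [σ (Fin.last s)] <+: level hF (s + 1) σ :=
  (Classical.choose_spec (exists_forces_extension hF _
    fun σ => level hF s (Fin.init σ) ++ [σ (Fin.last s)])).1 σ

theorem level_succ_forces {s k : ℕ} (hk : k ≤ s) {σ τ : Fin (s + 1) → Bool} (hne : σ ≠ τ) :
    Forces (F k) (level hF (s + 1) σ) (level hF (s + 1) τ) := by
  rw [level]
  exact (Classical.choose_spec (exists_forces_extension hF _ _)).2 (k, σ, τ) (by simp [hk]) hne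

theorem level_restrict_succ (x : ℕ → Bool) (s : ℕ) :
    (level hF s fun i => x i) ++ [x s] <+: level hF (s + 1) fun i => x i :=
  level_succ_extends hF s fun i => x i

theorem le_length_level_restrict (x : ℕ → Bool) (s : ℕ) :
    s ≤ (level hF s fun i => x i).length := by
  induction s with
  | zero => exact Nat.zero_le _
  | succ s ih =>
    have := (level_restrict_succ hF x s).length_le
    simp only [List.length_append, List.length_singleton] at this
    omega

end Tree

theorem exists_agrees_of_prefix_chain (c : ℕ → List Bool) (hc : ∀ s, c s <+: c (s + 1))
    (hlen : ∀ n, ∃ s, n < (c s).length) : ∃ A, ∀ s, Agrees A (c s) := by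
  have hmono : ∀ {s t}, s ≤ t → c s <+: c t := fun hst =>
    Nat.le_induction (List.prefix_refl _) (fun t _ ih => ih.trans (hc t)) _ hst
  choose s hs using hlen
  refine ⟨fun n => (c (s n))[n]'(hs n), fun t i hi => ?_⟩
  rcases le_total (s i) t with hst | hts
  · exact (hmono hst).getElem (hs i)
  · exact ((hmono hts).getElem hi).symm

/-- A form of Mycielski's theorem for Cantor space. -/
theorem exists_pairwise_not_of_forces {F : ℕ → (ℕ → Bool) → (ℕ → Bool) → Prop}
    (hF : ∀ k p q, ∃ p' q', p <+: p' ∧ q <+: q' ∧ Forces (F k) p' q') :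
    ∃ G : (ℕ → Bool) → ℕ → Bool, ∀ x y, x ≠ y → ∀ k, ¬F k (G x) (G y) := by
  have hbranch : ∀ x : ℕ → Bool, ∃ A, ∀ s, Agrees A (level hF s fun i => x i) := fun x =>
    exists_agrees_of_prefix_chain _
      (fun s => (List.prefix_append _ _).trans (level_restrict_succ hF x s))
      (fun n => ⟨n + 1, le_length_level_restrict hF x (n + 1)⟩)
  choose G hG using hbranch
  refine ⟨G, fun x y hxy k => ?_⟩
  obtain ⟨n, hn⟩ := Function.ne_iff.1 hxy
  have hne : (fun i : Fin (max k n + 1) => x i) ≠ fun i : Fin _ => y i :=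
    fun h => hn (congrFun h ⟨n, by omega⟩)
  exact level_succ_forces hF (le_max_left k n) hne _ _ (hG x _) (hG y _)

end Cantor

open Cantor

def pairRel (A : ℕ → Bool) (m n : ℕ) : Prop :=
  m = n ∨ (m / 2 = n / 2 ∧ A (m / 2) = true)

theorem pairRel_equivalence (A : ℕ → Bool) : Equivalence (pairRel A) where
  refl _ := Or.inl rfl
  symm := by
    rintro m n (rfl | ⟨h, hA⟩)
    exacts [Or.inl rfl, Or.inr ⟨h.symm, h ▸ hA⟩]
  trans := by
    rintro m n l (rfl | ⟨hmn, hA⟩) hnl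
    · exact hnl
    rcases hnl with rfl | ⟨hnl, -⟩
    exacts [Or.inr ⟨hmn, hA⟩, Or.inr ⟨hmn.trans hnl, hA⟩]

theorem pairRel_two_mul_iff (A : ℕ → Bool) (k : ℕ) :
    pairRel A (2 * k) (2 * k + 1) ↔ A k = true := by
  have h₁ : 2 * k / 2 = k := by omega
  have h₂ : (2 * k + 1) / 2 = k := by omega
  simp [pairRel, h₁, h₂]

theorem isOneQueryReduction_of_pairRel {A B : ℕ → Bool} {v : ℕ → ℕ}
    (hv : ∀ m n, pairRel A m n ↔ pairRel B (v m) (v n)) :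
    IsOneQueryReduction (fun n => v (2 * n) / 2)
      (fun n b => decide (v (2 * n) = v (2 * n + 1) ∨ v (2 * n) / 2 = v (2 * n + 1) / 2 ∧ b))
      A B := by
  intro n
  rw [Bool.eq_iff_iff, ← pairRel_two_mul_iff, hv]
  simp [pairRel]

theorem exists_forces_not_pairRel_reduction (v : ℕ → ℕ) (p q : List Bool) :
    ∃ p' q', p <+: p' ∧ q <+: q' ∧
      Forces (fun A B => ∀ m n, pairRel A m n ↔ pairRel B (v m) (v n)) p' q' := by
  obtain ⟨p', q', hp, hq, h⟩ := exists_forces_not_isOneQueryReduction _ _ p q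
  exact ⟨p', q', hp, hq, h.of_imp fun A B => isOneQueryReduction_of_pairRel⟩

theorem countable_setOf_computable : {v : ℕ → ℕ | Computable v}.Countable := by
  refine ((Set.countable_range Nat.Partrec.Code.eval).preimage
    (f := fun (v : ℕ → ℕ) n => Part.some (v n)) fun v w h => ?_).mono fun v hv => ?_
  · funext n; simpa using congrFun h n
  · exact Nat.Partrec.Code.exists_code.1 (Partrec.nat_iff.1 hv)

theorem CRedP.refl (R : ℕ → ℕ → Prop) : CRedP R R :=
  ⟨id, Computable.id, fun _ _ => Iff.rfl⟩

/-- there are continuum many pairwise `≤_c`-incomparable equivalence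
relations on `ℕ`. -/
theorem cred_antichain :
    ∃ S : Set (ℕ → ℕ → Prop),
      (∀ R ∈ S, Equivalence R) ∧ Cardinal.mk S = 2 ^ Cardinal.aleph0 ∧
      ∀ R ∈ S, ∀ R' ∈ S, R ≠ R' → ¬CRedP R R' ∧ ¬CRedP R' R := by
  obtain ⟨e, he⟩ := Set.countable_iff_exists_subset_range.1 countable_setOf_computable
  obtain ⟨G, hG⟩ := exists_pairwise_not_of_forces fun k => exists_forces_not_pairRel_reduction (e k)
  have hinc : ∀ x y, x ≠ y → ¬CRedP (pairRel (G x)) (pairRel (G y)) := by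
    rintro x y hxy ⟨v, hv, hred⟩
    obtain ⟨k, rfl⟩ := he hv
    exact hG x y hxy k hred
  have hinj : Function.Injective (pairRel ∘ G) := fun x y hxy => by
    by_contra hne
    apply hinc x y hne
    rw [show pairRel (G x) = pairRel (G y) from hxy]
    exact CRedP.refl _
  refine ⟨Set.range (pairRel ∘ G), ?_, ?_, ?_⟩
  · rintro R ⟨x, rfl⟩
    exact pairRel_equivalence _
  · rw [Cardinal.mk_range_eq _ hinj]
    simp
  · rintro R ⟨x, rfl⟩ R' ⟨y, rfl⟩ hne
    have hxy : x ≠ y := by rintro rfl; exact hne rfl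
    exact ⟨hinc x y hxy, hinc y x hxy.symm⟩
end
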